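/- arXiv:2301.08461 — 2 statements merged into one kernel-verified Lean document; each statement's English description precedes it below -/
import Mathlib

section
/- Euler's pentagonal number theorem: for |q| < 1, the infinite product ∏_{n=1}^∞ (1 - q^n) equals the sum ∑_{m=-∞}^∞ (-1)^m q^{m(3m-1)/2}. -/
/-!
The identity holds in any topological ring up to analytic side conditions
(`Pentagonal.tprod_one_sub_pow`): with `A k = ∑ₙ x^((k+1)n) ∏_{i ≤ n} (1 - x^(k+i+1))`, telescoping
gives `A k = 1 - x^(2k+3) - x^(3k+5) A (k+1)`, and iterating expresses `∏ (1 - x^(n+1))` as a partial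
pentagonal sum plus the error `± x^((k+1)(3k+4)/2) A k`. For `‖x‖ < 1` in a complete normed ring,
every finite product `∏ (1 - x^(k+i+1))` has norm at most `exp (1 - ‖x‖)⁻¹`, so the `A k` are
uniformly bounded and the error tends to zero. Pairing the indices `-k` and `k + 1` then turns the
resulting `ℕ`-indexed sum into the sum over `ℤ`.
-/

open Finset Filter Topology

theorem Finset.norm_prod_one_add_le {ι R : Type*} [NormedCommRing R] [NormOneClass R]
    (t : Finset ι) (f : ι → R) : ‖∏ i ∈ t, (1 + f i)‖ ≤ Real.exp (∑ i ∈ t, ‖f i‖) := by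
  have h := t.norm_prod_one_add_sub_one_le f
  have := norm_le_norm_sub_add (∏ i ∈ t, (1 + f i)) 1
  rw [norm_one] at this
  linarith

theorem summable_pow_pentagonal {r : ℝ} (h₀ : 0 ≤ r) (h₁ : r < 1) :
    Summable fun m : ℤ ↦ r ^ pentagonal m :=
  (summable_geometric_of_lt_one h₀ h₁).comp_injective pentagonal_injective

section NormedRing

variable {R : Type*} [NormedCommRing R] [NormOneClass R] {x : R}

theorem norm_prod_range_one_sub_pow_le (hx : ‖x‖ < 1) (k n : ℕ) :
    ‖∏ i ∈ range n, (1 - x ^ (k + i + 1))‖ ≤ Real.exp (1 - ‖x‖)⁻¹ :=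
  calc ‖∏ i ∈ range n, (1 - x ^ (k + i + 1))‖
      = ‖∏ i ∈ range n, (1 + -x ^ (k + i + 1))‖ := by simp only [sub_eq_add_neg]
    _ ≤ Real.exp (∑ i ∈ range n, ‖-x ^ (k + i + 1)‖) := norm_prod_one_add_le _ _
    _ ≤ Real.exp (∑ i ∈ range n, ‖x‖ ^ i) := by
      refine Real.exp_le_exp.2 (sum_le_sum fun i _ ↦ ?_)
      rw [norm_neg]
      exact (norm_pow_le _ _).trans (pow_le_pow_of_le_one (norm_nonneg _) hx.le (by omega))
    _ ≤ Real.exp (1 - ‖x‖)⁻¹ := by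
      refine Real.exp_le_exp.2 ?_
      have := geom_sum_Ico_le_of_lt_one (m := 0) (n := n) (norm_nonneg x) hx
      rwa [← range_eq_Ico, pow_zero, one_div] at this

theorem norm_pow_mul_prod_range_one_sub_pow_le (hx : ‖x‖ < 1) (k n : ℕ) :
    ‖x ^ ((k + 1) * n) * ∏ i ∈ range (n + 1), (1 - x ^ (k + i + 1))‖ ≤
      ‖x‖ ^ n * Real.exp (1 - ‖x‖)⁻¹ := by
  refine (norm_mul_le _ _).trans (mul_le_mul ?_ (norm_prod_range_one_sub_pow_le hx k _)
    (norm_nonneg _) (by positivity))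
  exact (norm_pow_le _ _).trans (pow_le_pow_of_le_one (norm_nonneg _) hx.le (by nlinarith))

theorem norm_tsum_pow_mul_prod_range_one_sub_pow_le (hx : ‖x‖ < 1) (k : ℕ) :
    ‖∑' n, x ^ ((k + 1) * n) * ∏ i ∈ range (n + 1), (1 - x ^ (k + i + 1))‖ ≤
      (1 - ‖x‖)⁻¹ * Real.exp (1 - ‖x‖)⁻¹ :=
  tsum_of_norm_bounded ((hasSum_geometric_of_lt_one (norm_nonneg x) hx).mul_right _)
    (norm_pow_mul_prod_range_one_sub_pow_le hx k)

theorem tendsto_pow_mul_tsum_pow_mul_prod_range_one_sub_pow (hx : ‖x‖ < 1) :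
    Tendsto (fun k ↦ (-1) ^ (k + 1) * x ^ ((k + 1) * (3 * k + 4) / 2) *
      ∑' n, x ^ ((k + 1) * n) * ∏ i ∈ range (n + 1), (1 - x ^ (k + i + 1))) atTop (𝓝 0) := by
  set B := (1 - ‖x‖)⁻¹ * Real.exp (1 - ‖x‖)⁻¹
  have hlim : Tendsto (fun k : ℕ ↦ ‖x‖ ^ k * B) atTop (𝓝 0) := by
    simpa using (tendsto_pow_atTop_nhds_zero_of_lt_one (norm_nonneg x) hx).mul_const B
  refine squeeze_zero_norm (fun k ↦ ?_) hlim
  refine (norm_mul_le _ _).trans ?_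
  refine mul_le_mul ?_ (norm_tsum_pow_mul_prod_range_one_sub_pow_le hx k) (norm_nonneg _)
    (by positivity)
  have hk : k ≤ (k + 1) * (3 * k + 4) / 2 := (Nat.le_div_iff_mul_le two_pos).2 (by nlinarith)
  calc ‖(-1 : R) ^ (k + 1) * x ^ ((k + 1) * (3 * k + 4) / 2)‖
      ≤ 1 * ‖x‖ ^ ((k + 1) * (3 * k + 4) / 2) :=
        (norm_mul_le _ _).trans (mul_le_mul ((norm_pow_le _ _).trans (by simp)) (norm_pow_le _ _)
          (norm_nonneg _) zero_le_one)
    _ ≤ ‖x‖ ^ k := by rw [one_mul]; exact pow_le_pow_of_le_one (norm_nonneg _) hx.le hk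

variable [CompleteSpace R]

theorem summable_pow_mul_prod_range_one_sub_pow (hx : ‖x‖ < 1) (k : ℕ) :
    Summable fun n ↦ x ^ ((k + 1) * n) * ∏ i ∈ range (n + 1), (1 - x ^ (k + i + 1)) :=
  .of_norm_bounded ((summable_geometric_of_lt_one (norm_nonneg x) hx).mul_right _)
    (norm_pow_mul_prod_range_one_sub_pow_le hx k)

theorem multipliable_one_sub_pow_add (hx : ‖x‖ < 1) (k : ℕ) :
    Multipliable fun n ↦ 1 - x ^ (n + k + 1) := by
  simp_rw [sub_eq_add_neg]
  refine multipliable_one_add_of_summable <|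
    (summable_geometric_of_lt_one (norm_nonneg x) hx).of_nonneg_of_le (fun _ ↦ norm_nonneg _)
      fun n ↦ ?_
  rw [norm_neg]
  exact (norm_pow_le _ _).trans (pow_le_pow_of_le_one (norm_nonneg _) hx.le (by omega))

theorem summable_neg_one_pow_mul_pow_pentagonal_sub (hx : ‖x‖ < 1) :
    Summable fun k : ℕ ↦ (-1) ^ k * (x ^ pentagonal (-k) - x ^ pentagonal (k + 1)) := by
  have hpent := summable_pow_pentagonal (norm_nonneg x) hx
  have hneg := hpent.comp_injective (neg_injective.comp Nat.cast_injective)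
  have hsucc := hpent.comp_injective ((add_left_injective 1).comp Nat.cast_injective)
  refine .of_norm_bounded (hneg.add hsucc) fun k ↦ ?_
  calc ‖(-1) ^ k * (x ^ pentagonal (-k) - x ^ pentagonal (k + 1))‖
      ≤ ‖(-1 : R) ^ k‖ * (‖x ^ pentagonal (-k)‖ + ‖x ^ pentagonal (k + 1)‖) :=
        (norm_mul_le _ _).trans (by gcongr; exact norm_sub_le _ _)
    _ ≤ 1 * (‖x‖ ^ pentagonal (-k) + ‖x‖ ^ pentagonal (k + 1)) := by
        gcongr
        · exact (norm_pow_le _ _).trans (by simp)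
        · exact norm_pow_le _ _
        · exact norm_pow_le _ _
    _ = _ := one_mul _

theorem tprod_one_sub_pow_eq_tsum_pentagonal (hx : ‖x‖ < 1) :
    ∏' n, (1 - x ^ (n + 1)) =
      ∑' k : ℕ, (-1) ^ k * (x ^ pentagonal (-k) - x ^ pentagonal (k + 1)) :=
  Pentagonal.tprod_one_sub_pow (tendsto_pow_atTop_nhds_zero_of_norm_lt_one hx)
    (summable_pow_mul_prod_range_one_sub_pow hx) (multipliable_one_sub_pow_add hx)
    (summable_neg_one_pow_mul_pow_pentagonal_sub hx)
    (tendsto_pow_mul_tsum_pow_mul_prod_range_one_sub_pow hx)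

end NormedRing

/-- Euler's pentagonal number theorem: for `|q| < 1`,
`∏_{n=1}^∞ (1 - q^n) = ∑_{m ∈ ℤ} (-1)^m q^{m(3m-1)/2}`. -/
theorem euler_pentagonal (q : ℂ) (hq : ‖q‖ < 1) :
    ∏' n : ℕ, (1 - q ^ (n + 1)) = ∑' m : ℤ, (-1 : ℂ) ^ m * q ^ (m * (3 * m - 1) / 2) := by
  have hterm (m : ℤ) : (-1 : ℂ) ^ m * q ^ (m * (3 * m - 1) / 2) = (-1) ^ m * q ^ pentagonal m := by
    rw [← natCast_pentagonal, zpow_natCast]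
  have hsum : Summable fun m : ℤ ↦ (-1 : ℂ) ^ (-m) * q ^ pentagonal (-m) :=
    .of_norm_bounded ((summable_pow_pentagonal (norm_nonneg q) hq).comp_injective neg_injective)
      fun m ↦ by simp
  rw [tsum_congr hterm, ← (Equiv.neg ℤ).tsum_eq]
  simp only [Equiv.neg_apply]
  rw [← tsum_nat_add_neg_add_one hsum, tprod_one_sub_pow_eq_tsum_pentagonal hq]
  refine tsum_congr fun k ↦ ?_
  rw [neg_neg, zpow_neg, zpow_add_one₀ (by norm_num), zpow_natCast, ← inv_pow, inv_neg_one]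
  ring
end

section
/- Define a_m = (-1)^j (2j+1) if m = (2j+1)² for some j ≥ 0, and a_m = 0 otherwise (the coefficients of η(8z)³). Then for every odd prime p there exists an integer λ_p (depending only on p) such that a_{p²m} + ((−m)/p) a_m + p·a_{m/p²} = λ_p a_m for all m ≥ 1. -/
private lemma Fmul (x y : ℕ) (hx : Odd x) (hy : Odd y) :
    ((-1 : ℤ)) ^ ((x * y - 1) / 2) * ((x * y : ℕ) : ℤ) =
      ((-1 : ℤ) ^ ((x - 1) / 2) * x) * ((-1 : ℤ) ^ ((y - 1) / 2) * y) := by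
  obtain ⟨u, rfl⟩ := hx
  obtain ⟨v, rfl⟩ := hy
  have h2 : ((2 * u + 1) * (2 * v + 1) - 1) / 2 = 2 * (u * v) + u + v := by
    have h1 : (2 * u + 1) * (2 * v + 1) = 2 * (2 * (u * v) + u + v) + 1 := by ring
    omega
  have h3 : (2 * u + 1 - 1) / 2 = u := by omega
  have h4 : (2 * v + 1 - 1) / 2 = v := by omega
  rw [h2, h3, h4]
  push_cast
  rw [pow_add, pow_add, pow_mul, neg_one_sq, one_pow]
  ring

/-- `η(8z)³ = ∑_{j≥0} (-1)^j (2j+1) q^{(2j+1)²}` is a Hecke eigenform: for every odd prime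
`p` there is an integer `λ_p` such that
`a_{p²m} + ((−m)/p)·a_m + p·a_{m/p²} = λ_p·a_m` for all `m ≥ 1`, where
`a_{(2j+1)²} = (-1)^j (2j+1)` and `a_m = 0` otherwise. -/
theorem eta8_cubed_hecke_eigen (a : ℕ → ℤ)
    (ha : ∀ j : ℕ, a ((2 * j + 1) ^ 2) = (-1) ^ j * (2 * j + 1))
    (ha0 : ∀ m : ℕ, (∀ j : ℕ, m ≠ (2 * j + 1) ^ 2) → a m = 0)
    (p : ℕ) (hp : p.Prime) (hodd : Odd p) :
    ∃ lam : ℤ, ∀ m : ℕ, 1 ≤ m →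
      a (p ^ 2 * m) + jacobiSym (-(m : ℤ)) p * a m
          + p * (if p ^ 2 ∣ m then a (m / p ^ 2) else 0)
        = lam * a m := by
  have hp2 : p ≠ 2 := by rintro rfl; exact (Nat.not_odd_iff_even.mpr even_two) hodd
  have hp0 : 0 < p := hp.pos
  haveI : NeZero p := ⟨hp0.ne'⟩
  have haF : ∀ n : ℕ, Odd n → a (n ^ 2) = (-1) ^ ((n - 1) / 2) * n := by
    intro n hn
    obtain ⟨j, rfl⟩ := hn
    have : (2 * j + 1 - 1) / 2 = j := by omega
    rw [this, ha j]
    push_cast; ring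
  refine ⟨(-1) ^ ((p - 1) / 2) * (p + 1), fun m hm => ?_⟩
  by_cases hsq : ∃ j : ℕ, m = (2 * j + 1) ^ 2
  · -- m is an odd square
    have key : ∀ n : ℕ, Odd n →
        a (p ^ 2 * n ^ 2) + jacobiSym (-((n ^ 2 : ℕ) : ℤ)) p * a (n ^ 2)
          + p * (if p ^ 2 ∣ n ^ 2 then a (n ^ 2 / p ^ 2) else 0)
        = (-1) ^ ((p - 1) / 2) * (p + 1) * a (n ^ 2) := by
      intro n hnodd
      have han : a (n ^ 2) = (-1) ^ ((n - 1) / 2) * n := haF n hnodd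
      by_cases hdvd : p ∣ n
      · obtain ⟨k, rfl⟩ := hdvd
        have hkodd : Odd k := (Nat.odd_mul.mp hnodd).2
        have hpk : Odd (p * k) := hnodd
        have e1 : p ^ 2 * (p * k) ^ 2 = (p * (p * k)) ^ 2 := by ring
        have hppk : Odd (p * (p * k)) := hodd.mul hpk
        have ha1 : a (p ^ 2 * (p * k) ^ 2)
            = (-1 : ℤ) ^ ((p * (p * k) - 1) / 2) * ((p * (p * k) : ℕ) : ℤ) := by
          rw [e1]; exact haF _ hppk
        have hj : jacobiSym (-(((p * k) ^ 2 : ℕ) : ℤ)) p = 0 := by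
          rw [jacobiSym.eq_zero_iff_not_coprime]
          intro hcop
          have hdvd1 : (p : ℤ) ∣ (-(((p * k) ^ 2 : ℕ) : ℤ)) := by
            push_cast; exact ⟨-(p * k ^ 2), by ring⟩
          have hco : IsCoprime (-(((p * k) ^ 2 : ℕ) : ℤ)) (p : ℤ) :=
            Int.isCoprime_iff_gcd_eq_one.mpr hcop
          have := hco.isUnit_of_dvd' hdvd1 dvd_rfl
          rw [Int.isUnit_iff] at this
          rcases this with h | h
          · exact hp.one_lt.ne' (by exact_mod_cast h)
          · have h0 : (0 : ℤ) ≤ (p : ℤ) := Int.natCast_nonneg p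
            omega
        have hd2 : p ^ 2 ∣ (p * k) ^ 2 := ⟨k ^ 2, by ring⟩
        have hq : (p * k) ^ 2 / p ^ 2 = k ^ 2 := by
          rw [mul_pow, Nat.mul_div_cancel_left _ (pow_pos hp0 2)]
        rw [ha1, if_pos hd2, hq, haF k hkodd, hj, han,
          Fmul p (p * k) hodd hpk, Fmul p k hodd hkodd]
        have hε : ((-1 : ℤ) ^ ((p - 1) / 2)) * ((-1 : ℤ) ^ ((p - 1) / 2)) = 1 := by
          rw [← pow_add, ← two_mul, pow_mul, neg_one_sq, one_pow]
        linear_combination (-(p : ℤ) * ((-1 : ℤ) ^ ((k - 1) / 2) * k)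
          - (p : ℤ) ^ 2 * ((-1 : ℤ) ^ ((k - 1) / 2) * k)) * hε
          + ((p : ℤ) ^ 2 * ((-1 : ℤ) ^ ((k - 1) / 2) * k)) * hε
      · have e1 : p ^ 2 * n ^ 2 = (p * n) ^ 2 := by ring
        have hpn : Odd (p * n) := hodd.mul hnodd
        have ha1 : a (p ^ 2 * n ^ 2)
            = (-1 : ℤ) ^ ((p * n - 1) / 2) * ((p * n : ℕ) : ℤ) := by
          rw [e1]; exact haF _ hpn
        have hd2 : ¬ p ^ 2 ∣ n ^ 2 := fun h => hdvd ((Nat.pow_dvd_pow_iff two_ne_zero).mp h)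
        have hgcd : (n : ℤ).gcd p = 1 := by
          rw [Int.gcd_natCast_natCast]
          exact Nat.Coprime.symm ((Nat.Prime.coprime_iff_not_dvd hp).mpr hdvd)
        have hj : jacobiSym (-((n ^ 2 : ℕ) : ℤ)) p = (-1) ^ ((p - 1) / 2) := by
          have hc : ((n : ℤ) ^ 2 : ℤ) = ((n ^ 2 : ℕ) : ℤ) := by push_cast; ring
          rw [← hc, neg_eq_neg_one_mul, jacobiSym.mul_left, jacobiSym.sq_one' hgcd,
            jacobiSym.at_neg_one hodd, mul_one,
            ZMod.χ₄_eq_neg_one_pow (Nat.odd_iff.mp hodd)]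
          have hpo : p % 2 = 1 := Nat.odd_iff.mp hodd
          have hpe : p / 2 = (p - 1) / 2 := by omega
          rw [hpe]
        rw [ha1, if_neg hd2, hj, han, Fmul p n hodd hnodd]
        ring
    obtain ⟨j, rfl⟩ := hsq
    exact key (2 * j + 1) ⟨j, rfl⟩
  · push_neg at hsq
    have h1 : a (p ^ 2 * m) = 0 := by
      apply ha0
      intro j hj
      have hpd : p ∣ 2 * j + 1 :=
        hp.dvd_of_dvd_pow (⟨p * m, by rw [← hj]; ring⟩ : p ∣ (2 * j + 1) ^ 2)
      obtain ⟨k, hk⟩ := hpd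
      have hkodd : Odd k := by
        have hh : Odd (p * k) := by rw [← hk]; exact ⟨j, rfl⟩
        rcases Nat.even_or_odd k with he | ho
        · exact absurd hh (Nat.not_odd_iff_even.mpr (he.mul_left p))
        · exact ho
      have hmk : m = k ^ 2 := by
        have : p ^ 2 * m = p ^ 2 * k ^ 2 := by rw [hj, hk]; ring
        exact Nat.eq_of_mul_eq_mul_left (pow_pos hp0 2) this
      obtain ⟨i, hi⟩ := hkodd
      exact hsq i (by rw [hmk, hi])
    have h2 : a m = 0 := ha0 m hsq
    have h3 : (if p ^ 2 ∣ m then a (m / p ^ 2) else 0) = 0 := by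
      split_ifs with hd
      · apply ha0
        intro j hj
        obtain ⟨t, rfl⟩ := hd
        rw [Nat.mul_div_cancel_left _ (pow_pos hp0 2)] at hj
        subst hj
        obtain ⟨i, hi⟩ := (hodd.mul ⟨j, rfl⟩ : Odd (p * (2 * j + 1)))
        exact hsq i (by rw [← hi]; ring)
      · rfl
    rw [h1, h2, h3]
    ring
end
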